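/- arXiv:2207.10820 — 2 statements merged into one kernel-verified Lean document; each statement's English description precedes it below -/
import Mathlib

section
/- Fix an integer N ≥ 1, data points d_1, …, d_N in ℝ^m, a partition of {1, …, N} into K nonempty clusters C_1, …, C_K with centroids d̄_k = (1/|C_k|) ∑_{i∈C_k} d_i and weights w_k = |C_k|/N, a real p ≥ 1, and ε > 0, and let D(K) = (1/N) ∑_{k=1}^K ∑_{i∈C_k} ‖d_i − d̄_k‖₂². If g : ℝ^m → ℝ is concave and differentiable with ‖∇g(v) − ∇g(u)‖₂ ≤ L‖u − v‖₂ for all u, v ∈ ℝ^m, and the support set is all of ℝ^m, then ḡ^N ≤ ḡ^K ≤ ḡ^N + (L/2) D(K), where ḡ^N = sup{ (1/N) ∑_{i=1}^N g(v_i) : (1/N) ∑_{i=1}^N ‖v_i − d_i‖₂^p ≤ ε^p } and ḡ^K = sup{ ∑_{k=1}^K w_k g(u_k) : ∑_{k=1}^K w_k ‖u_k − d̄_k‖₂^p ≤ ε^p } (suprema over all tuples in ℝ^m, in the extended reals). -/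
/-!
Averaging a feasible configuration `v` over each cluster gives a feasible `u` (Jensen for
`‖·‖ ^ p`) whose value is no smaller (Jensen for the concave `g`). Conversely, from `u` move every
point `d i` of cluster `k` by `u k - dbar k`: the transport cost is unchanged, and since the offsets
`d i - dbar k` sum to zero over each cluster, summing the descent inequality
`g (x + h) ≥ g x + ⟪∇g x, h⟫ - L / 2 * ‖h‖ ^ 2` over the cluster loses at most `L / 2` times the
within-cluster squared deviation.
-/

open Finset Set Function

section Smooth

variable {E : Type*} [NormedAddCommGroup E] [InnerProductSpace ℝ E] [CompleteSpace E]
  {g : E → ℝ} {L : ℝ}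

theorem abs_sub_sub_inner_gradient_le (hdiff : Differentiable ℝ g)
    (hlip : ∀ u v, ‖gradient g v - gradient g u‖ ≤ L * ‖u - v‖) (x y : E) :
    |g y - g x - inner ℝ (gradient g x) (y - x)| ≤ L / 2 * ‖y - x‖ ^ 2 := by
  set h := y - x
  -- compare `t ↦ g (x + t • h) - g x - t ⟪∇g x, h⟫` with `t ↦ L/2 t² ‖h‖²` on `[0, 1]`
  have hderiv (t : ℝ) : HasDerivAt (fun s : ℝ => g (x + s • h) - g x - s * inner ℝ (gradient g x) h)
      (inner ℝ (gradient g (x + t • h) - gradient g x) h) t := by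
    have hline : HasDerivAt (fun s : ℝ => x + s • h) h t :=
      ((hasDerivAt_id t).smul_const h).const_add x |>.congr_deriv (one_smul ℝ h)
    have hcomp := (hdiff (x + t • h)).hasGradientAt.hasFDerivAt.comp_hasDerivAt t hline
    rw [InnerProductSpace.toDual_apply_apply] at hcomp
    exact ((hcomp.sub_const (g x)).sub ((hasDerivAt_id t).mul_const _)).congr_deriv
      (by rw [inner_sub_left, one_mul])
  have hbound (t : ℝ) : HasDerivAt (fun s : ℝ => L / 2 * s ^ 2 * ‖h‖ ^ 2) (L * t * ‖h‖ ^ 2) t :=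
    (((hasDerivAt_pow 2 t).const_mul (L / 2)).mul_const (‖h‖ ^ 2)).congr_deriv (by ring)
  have key := image_norm_le_of_norm_deriv_right_le_deriv_boundary (a := 0) (b := 1)
    (fun t _ => (hderiv t).continuousAt.continuousWithinAt)
    (fun t _ => (hderiv t).hasDerivWithinAt) (by simp) hbound
    (fun t ht => ?_) (right_mem_Icc.2 zero_le_one)
  · simpa [h] using key
  calc ‖inner ℝ (gradient g (x + t • h) - gradient g x) h‖
      ≤ ‖gradient g (x + t • h) - gradient g x‖ * ‖h‖ := by
        rw [Real.norm_eq_abs]; exact abs_real_inner_le_norm _ _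
    _ ≤ L * ‖x - (x + t • h)‖ * ‖h‖ := by gcongr; exact hlip _ _
    _ = L * t * ‖h‖ ^ 2 := by
        rw [sub_add_cancel_left, norm_neg, norm_smul, Real.norm_of_nonneg ht.1]; ring

theorem le_average_add_of_sum_eq_zero (hdiff : Differentiable ℝ g)
    (hlip : ∀ u v, ‖gradient g v - gradient g u‖ ≤ L * ‖u - v‖)
    {ι : Type*} {s : Finset ι} (hs : s.Nonempty) {h : ι → E} (hsum : ∑ i ∈ s, h i = 0) (x : E) :
    g x ≤ (#s : ℝ)⁻¹ * ∑ i ∈ s, g (x + h i) + L / 2 * ((#s : ℝ)⁻¹ * ∑ i ∈ s, ‖h i‖ ^ 2) := by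
  have hdescent (i : ι) : g x + inner ℝ (gradient g x) (h i) - L / 2 * ‖h i‖ ^ 2 ≤ g (x + h i) := by
    have := abs_sub_sub_inner_gradient_le hdiff hlip x (x + h i)
    rw [add_sub_cancel_left] at this
    linarith [neg_abs_le (g (x + h i) - g x - inner ℝ (gradient g x) (h i))]
  have hsum_descent := sum_le_sum fun i (_ : i ∈ s) => hdescent i
  rw [Finset.sum_sub_distrib, Finset.sum_add_distrib, ← inner_sum, hsum, inner_zero_right,
    add_zero, sum_const, nsmul_eq_mul, ← mul_sum] at hsum_descent
  have hcard : (0 : ℝ) < #s := by exact_mod_cast hs.card_pos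
  rw [← mul_le_mul_iff_of_pos_left hcard]
  field_simp
  linarith

end Smooth

section Average

variable {ι : Type*} {s : Finset ι}

theorem sum_inv_card_eq_one (hs : s.Nonempty) : ∑ _i ∈ s, (#s : ℝ)⁻¹ = 1 := by
  rw [sum_const, nsmul_eq_mul, mul_inv_cancel₀ (by exact_mod_cast hs.card_pos.ne')]

theorem sum_sub_average_eq_zero {E : Type*} [AddCommGroup E] [Module ℝ E] (d : ι → E) :
    ∑ i ∈ s, (d i - (#s : ℝ)⁻¹ • ∑ j ∈ s, d j) = 0 := by
  rcases s.eq_empty_or_nonempty with rfl | hs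
  · simp
  rw [sum_sub_distrib, sum_const, ← Nat.cast_smul_eq_nsmul ℝ, smul_smul,
    mul_inv_cancel₀ (by exact_mod_cast hs.card_pos.ne'), one_smul, sub_self]

theorem norm_average_sub_average_rpow_le {E : Type*} [SeminormedAddCommGroup E] [NormedSpace ℝ E]
    {p : ℝ} (hp : 1 ≤ p) (hs : s.Nonempty) (v d : ι → E) :
    ‖(#s : ℝ)⁻¹ • ∑ i ∈ s, v i - (#s : ℝ)⁻¹ • ∑ i ∈ s, d i‖ ^ p ≤
      (#s : ℝ)⁻¹ * ∑ i ∈ s, ‖v i - d i‖ ^ p := by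
  calc ‖(#s : ℝ)⁻¹ • ∑ i ∈ s, v i - (#s : ℝ)⁻¹ • ∑ i ∈ s, d i‖ ^ p
      ≤ (∑ i ∈ s, (#s : ℝ)⁻¹ * ‖v i - d i‖) ^ p := by
        rw [← smul_sub, ← sum_sub_distrib, norm_smul, Real.norm_of_nonneg (by positivity),
          ← mul_sum]
        gcongr
        exact norm_sum_le _ _
    _ ≤ ∑ i ∈ s, (#s : ℝ)⁻¹ * ‖v i - d i‖ ^ p :=
        Real.rpow_arith_mean_le_arith_mean_rpow s _ _ (fun _ _ => by positivity)
          (sum_inv_card_eq_one hs) (fun _ _ => norm_nonneg _) hp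
    _ = (#s : ℝ)⁻¹ * ∑ i ∈ s, ‖v i - d i‖ ^ p := (mul_sum ..).symm

theorem ConcaveOn.average_le_map_average {E : Type*} [AddCommGroup E] [Module ℝ E] {g : E → ℝ}
    (hg : ConcaveOn ℝ univ g) (hs : s.Nonempty) (v : ι → E) :
    (#s : ℝ)⁻¹ * ∑ i ∈ s, g (v i) ≤ g ((#s : ℝ)⁻¹ • ∑ i ∈ s, v i) := by
  simpa only [smul_eq_mul, ← mul_sum, ← smul_sum] using
    hg.le_map_sum (fun _ _ => by positivity) (sum_inv_card_eq_one hs) fun i _ => mem_univ (v i)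

end Average

theorem sum_eq_sum_sum_of_partition {ι κ M : Type*} [Fintype ι] [Fintype κ] [AddCommMonoid M]
    {C : κ → Finset ι} (hCdisj : Pairwise (Disjoint on C)) (hCcover : ∀ i, ∃ k, i ∈ C k)
    (f : ι → M) : ∑ i, f i = ∑ k, ∑ i ∈ C k, f i := by
  classical
  have hunion : Finset.univ.biUnion C = Finset.univ :=
    eq_univ_of_forall fun i => mem_biUnion.2 <| by simpa using hCcover i
  rw [← sum_biUnion fun k _ l _ hkl => hCdisj hkl, hunion]

theorem sum_weight_mul_average {ι κ : Type*} [Fintype κ] {C : κ → Finset ι}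
    (hCne : ∀ k, (C k).Nonempty) {w : κ → ℝ} {N : ℕ} (hw : ∀ k, w k = #(C k) / N) (S : κ → ℝ) :
    ∑ k, w k * ((#(C k) : ℝ)⁻¹ * S k) = 1 / N * ∑ k, S k := by
  rw [mul_sum]
  refine sum_congr rfl fun k _ => ?_
  have hcard : (#(C k) : ℝ) ≠ 0 := by exact_mod_cast (hCne k).card_pos.ne'
  rw [hw k]
  field_simp

section Clustering

variable {E ι κ : Type*} [NormedAddCommGroup E] [Fintype ι] [Fintype κ]
  {d : ι → E} {C : κ → Finset ι} {dbar : κ → E} {w : κ → ℝ} {N : ℕ} {p : ℝ}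

theorem exists_cluster_cost_le_and_value_le [NormedSpace ℝ E] (hCne : ∀ k, (C k).Nonempty)
    (hCdisj : Pairwise (Disjoint on C)) (hCcover : ∀ i, ∃ k, i ∈ C k)
    (hdbar : ∀ k, dbar k = (#(C k) : ℝ)⁻¹ • ∑ i ∈ C k, d i) (hw : ∀ k, w k = #(C k) / N)
    (hp : 1 ≤ p) {g : E → ℝ} (hg : ConcaveOn ℝ univ g) (v : ι → E) :
    ∃ u : κ → E, ∑ k, w k * ‖u k - dbar k‖ ^ p ≤ 1 / N * ∑ i, ‖v i - d i‖ ^ p ∧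
      1 / N * ∑ i, g (v i) ≤ ∑ k, w k * g (u k) := by
  have hw_nonneg (k : κ) : 0 ≤ w k := by rw [hw k]; positivity
  refine ⟨fun k => (#(C k) : ℝ)⁻¹ • ∑ i ∈ C k, v i, ?_, ?_⟩
  · rw [sum_eq_sum_sum_of_partition hCdisj hCcover, ← sum_weight_mul_average hCne hw]
    refine sum_le_sum fun k _ => mul_le_mul_of_nonneg_left ?_ (hw_nonneg k)
    rw [hdbar k]
    exact norm_average_sub_average_rpow_le hp (hCne k) v d
  · rw [sum_eq_sum_sum_of_partition hCdisj hCcover, ← sum_weight_mul_average hCne hw]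
    exact sum_le_sum fun k _ => mul_le_mul_of_nonneg_left
      (hg.average_le_map_average (hCne k) v) (hw_nonneg k)

theorem exists_point_cost_eq_and_value_le [InnerProductSpace ℝ E] [CompleteSpace E]
    (hCne : ∀ k, (C k).Nonempty) (hCdisj : Pairwise (Disjoint on C))
    (hCcover : ∀ i, ∃ k, i ∈ C k) (hdbar : ∀ k, dbar k = (#(C k) : ℝ)⁻¹ • ∑ i ∈ C k, d i)
    (hw : ∀ k, w k = #(C k) / N) {g : E → ℝ} {L : ℝ} (hdiff : Differentiable ℝ g)
    (hlip : ∀ u v, ‖gradient g v - gradient g u‖ ≤ L * ‖u - v‖) (u : κ → E) :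
    ∃ v : ι → E, 1 / N * ∑ i, ‖v i - d i‖ ^ p = ∑ k, w k * ‖u k - dbar k‖ ^ p ∧
      ∑ k, w k * g (u k) ≤
        1 / N * ∑ i, g (v i) + L / 2 * (1 / N * ∑ k, ∑ i ∈ C k, ‖d i - dbar k‖ ^ 2) := by
  have hw_nonneg (k : κ) : 0 ≤ w k := by rw [hw k]; positivity
  choose a ha using hCcover
  have hmem (k : κ) (i : ι) (hi : i ∈ C k) : a i = k :=
    by_contra fun hne => (hCdisj hne).forall_ne_finset (ha i) hi rfl
  set v : ι → E := fun i => u (a i) + (d i - dbar (a i))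
  have hv (k : κ) (i : ι) (hi : i ∈ C k) : v i = u k + (d i - dbar k) := by
    simp only [v, hmem k i hi]
  have hoffset (k : κ) (i : ι) (hi : i ∈ C k) : v i - d i = u k - dbar k := by
    rw [hv k i hi]; abel
  refine ⟨v, ?_, ?_⟩
  · rw [sum_eq_sum_sum_of_partition hCdisj fun i => ⟨a i, ha i⟩, ← sum_weight_mul_average hCne hw]
    refine sum_congr rfl fun k _ => ?_
    rw [sum_congr rfl fun i hi => congrArg (‖·‖ ^ p) (hoffset k i hi), sum_const, nsmul_eq_mul,
      inv_mul_cancel_left₀ (by exact_mod_cast (hCne k).card_pos.ne')]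
  · have hcentered (k : κ) : ∑ i ∈ C k, (d i - dbar k) = 0 := by
      rw [hdbar k]; exact sum_sub_average_eq_zero d
    calc ∑ k, w k * g (u k)
        ≤ ∑ k, w k * ((#(C k) : ℝ)⁻¹ * ∑ i ∈ C k, g (v i)
            + L / 2 * ((#(C k) : ℝ)⁻¹ * ∑ i ∈ C k, ‖d i - dbar k‖ ^ 2)) := by
          refine sum_le_sum fun k _ => mul_le_mul_of_nonneg_left ?_ (hw_nonneg k)
          have := le_average_add_of_sum_eq_zero hdiff hlip (hCne k) (hcentered k) (u k)
          rwa [← sum_congr rfl fun i hi => congrArg g (hv k i hi)] at this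
      _ = 1 / N * ∑ i, g (v i) + L / 2 * (1 / N * ∑ k, ∑ i ∈ C k, ‖d i - dbar k‖ ^ 2) := by
          simp only [mul_add, sum_add_distrib, mul_left_comm (w _) (L / 2), ← mul_sum,
            sum_weight_mul_average hCne hw, sum_eq_sum_sum_of_partition hCdisj fun i => ⟨a i, ha i⟩]

end Clustering

theorem sSup_le_sSup_add_of_forall_exists {α β : Type*} {P : α → Prop} {Q : β → Prop}
    {f : α → ℝ} {h : β → ℝ} {c : ℝ} (H : ∀ a, P a → ∃ b, Q b ∧ f a ≤ h b + c) :
    sSup {y : EReal | ∃ a, P a ∧ y = f a} ≤ sSup {y : EReal | ∃ b, Q b ∧ y = h b} + c := by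
  refine sSup_le ?_
  rintro _ ⟨a, ha, rfl⟩
  obtain ⟨b, hb, hle⟩ := H a ha
  calc (f a : EReal) ≤ (h b + c : ℝ) := EReal.coe_le_coe_iff.2 hle
    _ = h b + c := EReal.coe_add ..
    _ ≤ _ := by gcongr; exact le_sSup ⟨b, hb, rfl⟩

theorem sSup_le_sSup_of_forall_exists {α β : Type*} {P : α → Prop} {Q : β → Prop}
    {f : α → ℝ} {h : β → ℝ} (H : ∀ a, P a → ∃ b, Q b ∧ f a ≤ h b) :
    sSup {y : EReal | ∃ a, P a ∧ y = f a} ≤ sSup {y : EReal | ∃ b, Q b ∧ y = h b} := by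
  simpa using sSup_le_sSup_add_of_forall_exists (c := 0) (by simpa using H)

theorem stmt_2_general {m N K : ℕ}
    (d : Fin N → EuclideanSpace ℝ (Fin m))
    (C : Fin K → Finset (Fin N))
    (hCne : ∀ k, (C k).Nonempty)
    (hCdisj : ∀ k l, k ≠ l → Disjoint (C k) (C l))
    (hCcover : ∀ i, ∃ k, i ∈ C k)
    (dbar : Fin K → EuclideanSpace ℝ (Fin m))
    (hdbar : ∀ k, dbar k = ((C k).card : ℝ)⁻¹ • ∑ i ∈ C k, d i)
    (w : Fin K → ℝ) (hw : ∀ k, w k = ((C k).card : ℝ) / N)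
    (p : ℝ) (hp : 1 ≤ p) (ε : ℝ)
    (DK : ℝ) (hDK : DK = (1 / (N : ℝ)) * ∑ k, ∑ i ∈ C k, ‖d i - dbar k‖ ^ 2)
    (g : EuclideanSpace ℝ (Fin m) → ℝ) (L : ℝ)
    (hg : ConcaveOn ℝ Set.univ g)
    (hdiff : Differentiable ℝ g)
    (hlip : ∀ u v, ‖gradient g v - gradient g u‖ ≤ L * ‖u - v‖) :
    sSup {y : EReal | ∃ v : Fin N → EuclideanSpace ℝ (Fin m),
        (1 / (N : ℝ)) * ∑ i, ‖v i - d i‖ ^ p ≤ ε ^ p ∧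
        y = (((1 / (N : ℝ)) * ∑ i, g (v i) : ℝ) : EReal)} ≤
      sSup {y : EReal | ∃ u : Fin K → EuclideanSpace ℝ (Fin m),
        ∑ k, w k * ‖u k - dbar k‖ ^ p ≤ ε ^ p ∧
        y = ((∑ k, w k * g (u k) : ℝ) : EReal)} ∧
    sSup {y : EReal | ∃ u : Fin K → EuclideanSpace ℝ (Fin m),
        ∑ k, w k * ‖u k - dbar k‖ ^ p ≤ ε ^ p ∧
        y = ((∑ k, w k * g (u k) : ℝ) : EReal)} ≤
      sSup {y : EReal | ∃ v : Fin N → EuclideanSpace ℝ (Fin m),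
        (1 / (N : ℝ)) * ∑ i, ‖v i - d i‖ ^ p ≤ ε ^ p ∧
        y = (((1 / (N : ℝ)) * ∑ i, g (v i) : ℝ) : EReal)} +
      ((L / 2 * DK : ℝ) : EReal) := by
  constructor
  · refine sSup_le_sSup_of_forall_exists fun v hv => ?_
    obtain ⟨u, hcost, hvalue⟩ :=
      exists_cluster_cost_le_and_value_le hCne hCdisj hCcover hdbar hw hp hg v
    exact ⟨u, hcost.trans hv, hvalue⟩
  · refine sSup_le_sSup_add_of_forall_exists fun u hu => ?_
    obtain ⟨v, hcost, hvalue⟩ :=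
      exists_point_cost_eq_and_value_le (p := p) hCne hCdisj hCcover hdbar hw hdiff hlip u
    exact ⟨v, hcost.trans_le hu, hDK ▸ hvalue⟩

/-- with support set all of `ℝ^m`, for concave `L`-smooth `g`,
`ḡ^N ≤ ḡ^K ≤ ḡ^N + (L/2) D(K)` (suprema in the extended reals). -/
theorem stmt_2 {m N K : ℕ} (hN : 1 ≤ N) (hK : 1 ≤ K)
    (d : Fin N → EuclideanSpace ℝ (Fin m))
    (C : Fin K → Finset (Fin N))
    (hCne : ∀ k, (C k).Nonempty)
    (hCdisj : ∀ k l, k ≠ l → Disjoint (C k) (C l))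
    (hCcover : ∀ i, ∃ k, i ∈ C k)
    (dbar : Fin K → EuclideanSpace ℝ (Fin m))
    (hdbar : ∀ k, dbar k = ((C k).card : ℝ)⁻¹ • ∑ i ∈ C k, d i)
    (w : Fin K → ℝ) (hw : ∀ k, w k = ((C k).card : ℝ) / N)
    (p : ℝ) (hp : 1 ≤ p) (ε : ℝ) (hε : 0 < ε)
    (DK : ℝ) (hDK : DK = (1 / (N : ℝ)) * ∑ k, ∑ i ∈ C k, ‖d i - dbar k‖ ^ 2)
    (g : EuclideanSpace ℝ (Fin m) → ℝ) (L : ℝ)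
    (hg : ConcaveOn ℝ Set.univ g)
    (hdiff : Differentiable ℝ g)
    (hlip : ∀ u v, ‖gradient g v - gradient g u‖ ≤ L * ‖u - v‖) :
    sSup {y : EReal | ∃ v : Fin N → EuclideanSpace ℝ (Fin m),
        (1 / (N : ℝ)) * ∑ i, ‖v i - d i‖ ^ p ≤ ε ^ p ∧
        y = (((1 / (N : ℝ)) * ∑ i, g (v i) : ℝ) : EReal)} ≤
      sSup {y : EReal | ∃ u : Fin K → EuclideanSpace ℝ (Fin m),
        ∑ k, w k * ‖u k - dbar k‖ ^ p ≤ ε ^ p ∧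
        y = ((∑ k, w k * g (u k) : ℝ) : EReal)} ∧
    sSup {y : EReal | ∃ u : Fin K → EuclideanSpace ℝ (Fin m),
        ∑ k, w k * ‖u k - dbar k‖ ^ p ≤ ε ^ p ∧
        y = ((∑ k, w k * g (u k) : ℝ) : EReal)} ≤
      sSup {y : EReal | ∃ v : Fin N → EuclideanSpace ℝ (Fin m),
        (1 / (N : ℝ)) * ∑ i, ‖v i - d i‖ ^ p ≤ ε ^ p ∧
        y = (((1 / (N : ℝ)) * ∑ i, g (v i) : ℝ) : EReal)} +
      ((L / 2 * DK : ℝ) : EReal) :=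
  stmt_2_general d C hCne hCdisj hCcover dbar hdbar w hw p hp ε DK hDK g L hg hdiff hlip
end

section
/- Let ‖·‖ be a norm on ℝ^m with dual norm ‖z‖_* = sup{⟨z, u⟩ : ‖u‖ ≤ 1}, let S ⊆ ℝ^m be nonempty, let g : ℝ^m → ℝ, and let p > 1 and q = p/(p−1) with φ(q) = (q−1)^{q−1}/q^q. Fix an integer K ≥ 1, points d̄_1, …, d̄_K ∈ ℝ^m, positive weights w_1, …, w_K with ∑_k w_k = 1, and ε > 0. Define [−g]^*(w) = sup_{u ∈ ℝ^m} (⟨w, u⟩ + g(u)) and σ_S(y) = sup_{u ∈ S} ⟨y, u⟩ (extended-real valued). Then for every λ > 0 and every z_1, …, z_K, y_1, …, y_K ∈ ℝ^m, in the extended reals, sup{ ∑_{k=1}^K w_k g(v_k) : v_k ∈ S for all k, ∑_{k=1}^K w_k ‖v_k − d̄_k‖^p ≤ ε^p } ≤ λ ε^p + ∑_{k=1}^K w_k ( [−g]^*(z_k − y_k) + σ_S(y_k) − ⟨z_k, d̄_k⟩ + φ(q) λ^{1−q} ‖z_k‖_*^q ). -/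
open scoped BigOperators RealInnerProductSpace

/-!
For any feasible `v`, each term splits as `g v_k = (⟪z_k - y_k, v_k⟫ + g v_k) + ⟪y_k, v_k⟫
- ⟪z_k, d̄_k⟫ - ⟪z_k, v_k - d̄_k⟫`. The first two pieces are bounded by `[-g]^*(z_k - y_k)` and
`σ_S(y_k)`. The last is bounded by `‖z_k‖_* ‖v_k - d̄_k‖`, and Young's inequality with the
multiplier `λ` turns this into `λ ‖v_k - d̄_k‖^p + φ(q) λ^{1-q} ‖z_k‖_*^q`; averaging with the
weights `w_k` and using the budget `∑ w_k ‖v_k - d̄_k‖^p ≤ ε^p` gives the bound. The dual norm is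
finite because in finite dimension the norm `‖·‖` dominates a multiple of the Euclidean one.
-/

@[norm_cast]
theorem EReal.coe_finset_sum {ι : Type*} (s : Finset ι) (f : ι → ℝ) :
    ((∑ i ∈ s, f i : ℝ) : EReal) = ∑ i ∈ s, (f i : EReal) :=
  map_sum (⟨⟨(↑), EReal.coe_zero⟩, EReal.coe_add⟩ : ℝ →+ EReal) f s

theorem coe_inner_add_le_iSup_add_sSup {E : Type*} [NormedAddCommGroup E] [InnerProductSpace ℝ E]
    (g : E → ℝ) {S : Set E} {v : E} (hv : v ∈ S) (z y : E) :
    ((⟪z, v⟫ + g v : ℝ) : EReal) ≤ (⨆ u, ((⟪z - y, u⟫ + g u : ℝ) : EReal)) +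
      sSup {t : EReal | ∃ u ∈ S, t = ((⟪y, u⟫ : ℝ) : EReal)} :=
  calc ((⟪z, v⟫ + g v : ℝ) : EReal)
        = ((⟪z - y, v⟫ + g v : ℝ) : EReal) + ((⟪y, v⟫ : ℝ) : EReal) := by
          rw [← EReal.coe_add, inner_sub_left]; ring_nf
    _ ≤ _ := by
      gcongr
      · exact le_iSup (fun u => ((⟪z - y, u⟫ + g u : ℝ) : EReal)) v
      · exact le_sSup ⟨v, hv, rfl⟩

theorem Real.young_inequality_scaled {p q lam a t : ℝ} (hpq : p.HolderConjugate q)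
    (hlam : 0 < lam) (ha : 0 ≤ a) (ht : 0 ≤ t) :
    a * t ≤ lam * t ^ p + (q - 1) ^ (q - 1) / q ^ q * lam ^ (1 - q) * a ^ q := by
  have hp := hpq.pos
  have hq := hpq.symm.pos
  have hqp : q / p = q - 1 := hpq.symm.div_conj_eq_sub_one
  have hlp : 0 < lam * p := by positivity
  have hconst : (q - 1) ^ (q - 1) / q ^ q * lam ^ (1 - q) = (lam * p) ^ (1 - q) / q := by
    have hq1 : (q - 1) ^ (q - 1) = q ^ (q - 1) / p ^ (q - 1) := by
      rw [← Real.div_rpow hq.le hp.le, hqp]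
    rw [hq1, Real.mul_rpow hlam.le hp.le, show 1 - q = -(q - 1) by ring, Real.rpow_neg hlam.le,
      Real.rpow_neg hp.le, show q ^ q = q ^ (q - 1) * q by rw [← Real.rpow_add_one hq.ne']; ring_nf]
    field_simp
  -- Young's inequality for the pair `(c t, a / c)`, where `c ^ p = λ p`.
  set c := (lam * p) ^ p⁻¹
  have hc : 0 < c := by positivity
  have hcp : c ^ p = lam * p := Real.rpow_inv_rpow hlp.le hp.ne'
  have hcq : c ^ q = (lam * p) ^ (q - 1) := by
    rw [← Real.rpow_mul hlp.le, ← hqp, inv_mul_eq_div]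
  calc a * t = c * t * (a / c) := by field_simp
    _ ≤ (c * t) ^ p / p + (a / c) ^ q / q :=
      Real.young_inequality_of_nonneg (by positivity) (by positivity) hpq
    _ = lam * t ^ p + (lam * p) ^ (1 - q) / q * a ^ q := by
      rw [Real.mul_rpow hc.le ht, Real.div_rpow ha hc.le, hcp, hcq,
        show 1 - q = -(q - 1) by ring, Real.rpow_neg hlp.le]
      field_simp
    _ = _ := by rw [hconst]

namespace Seminorm

section NormedSpace

variable {E : Type*} [NormedAddCommGroup E] [NormedSpace ℝ E] [FiniteDimensional ℝ E]

theorem continuous_of_finiteDimensional (N : Seminorm ℝ E) : Continuous N :=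
  N.convexOn.locallyLipschitz.continuous

theorem exists_norm_le_mul_of_definite (N : Seminorm ℝ E) (hN : ∀ x, N x = 0 → x = 0) :
    ∃ C, 0 ≤ C ∧ ∀ u, ‖u‖ ≤ C * N u := by
  rcases subsingleton_or_nontrivial E with hE | hE
  · exact ⟨0, le_rfl, fun u => by simp [Subsingleton.elim u 0]⟩
  obtain ⟨x₀, hx₀, hmin⟩ := (isCompact_sphere (0 : E) 1).exists_isMinOn
    (NormedSpace.sphere_nonempty.2 zero_le_one) N.continuous_of_finiteDimensional.continuousOn
  have hx₀ : ‖x₀‖ = 1 := by simpa using hx₀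
  have hc : 0 < N x₀ := (apply_nonneg N x₀).lt_of_ne' fun h => by simp [hN x₀ h] at hx₀
  refine ⟨(N x₀)⁻¹, inv_nonneg.2 hc.le, fun u => ?_⟩
  rcases eq_or_ne u 0 with rfl | hu
  · simp
  have hnu : 0 < ‖u‖ := norm_pos_iff.2 hu
  have hle : N x₀ ≤ N (‖u‖⁻¹ • u) := hmin (by simp [norm_smul, hnu.ne'])
  rw [map_smul_eq_mul, norm_inv, norm_norm, le_inv_mul_iff₀ hnu] at hle
  rw [le_inv_mul_iff₀ hc, mul_comm]
  exact hle

end NormedSpace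

section InnerProductSpace

variable {E : Type*} [NormedAddCommGroup E] [InnerProductSpace ℝ E] [FiniteDimensional ℝ E]
  (N : Seminorm ℝ E)

noncomputable def dualNorm (z : E) : ℝ := sSup {t : ℝ | ∃ u, N u ≤ 1 ∧ t = ⟪z, u⟫}

variable {N}

theorem bddAbove_inner_of_le_one (hN : ∀ x, N x = 0 → x = 0) (z : E) :
    BddAbove {t : ℝ | ∃ u, N u ≤ 1 ∧ t = ⟪z, u⟫} := by
  obtain ⟨C, hC, hCN⟩ := N.exists_norm_le_mul_of_definite hN
  refine ⟨‖z‖ * C, ?_⟩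
  rintro _ ⟨u, hu, rfl⟩
  calc ⟪z, u⟫ ≤ ‖z‖ * ‖u‖ := real_inner_le_norm z u
    _ ≤ ‖z‖ * C := by
      gcongr
      exact (hCN u).trans (mul_le_of_le_one_right hC hu)

theorem dualNorm_nonneg (hN : ∀ x, N x = 0 → x = 0) (z : E) : 0 ≤ N.dualNorm z :=
  le_csSup (bddAbove_inner_of_le_one hN z) ⟨0, by simp, by simp⟩

theorem inner_le_dualNorm_mul (hN : ∀ x, N x = 0 → x = 0) (z u : E) :
    ⟪z, u⟫ ≤ N.dualNorm z * N u := by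
  rcases (apply_nonneg N u).eq_or_lt' with hu | hu
  · simp [hN u hu]
  have h : (N u)⁻¹ * ⟪z, u⟫ ≤ N.dualNorm z :=
    le_csSup (bddAbove_inner_of_le_one hN z)
      ⟨(N u)⁻¹ • u, by simp [map_smul_eq_mul, abs_of_pos hu, hu.ne'], by rw [real_inner_smul_right]⟩
  rwa [inv_mul_le_iff₀ hu, mul_comm] at h

variable {p q lam : ℝ}

theorem neg_inner_sub_le (hN : ∀ x, N x = 0 → x = 0) (hpq : p.HolderConjugate q)
    (hlam : 0 < lam) (z v d : E) :
    -⟪z, v - d⟫ ≤ lam * N (v - d) ^ p +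
      (q - 1) ^ (q - 1) / q ^ q * lam ^ (1 - q) * N.dualNorm z ^ q :=
  calc -⟪z, v - d⟫ = ⟪z, d - v⟫ := by rw [← inner_neg_right, neg_sub]
    _ ≤ N.dualNorm z * N (v - d) := by
      rw [← map_neg_eq_map, neg_sub]
      exact inner_le_dualNorm_mul hN z _
    _ ≤ _ := Real.young_inequality_scaled hpq hlam (dualNorm_nonneg hN z) (apply_nonneg N _)

theorem sum_mul_le_lagrangian (hN : ∀ x, N x = 0 → x = 0) (hpq : p.HolderConjugate q)
    (hlam : 0 < lam) {ι : Type*} (s : Finset ι) {w : ι → ℝ} (hw : ∀ k, 0 ≤ w k) (f : E → ℝ)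
    (v d z : ι → E) {B : ℝ} (hB : ∑ k ∈ s, w k * N (v k - d k) ^ p ≤ B) :
    ∑ k ∈ s, w k * f (v k) ≤ lam * B + ∑ k ∈ s, w k * (f (v k) + ⟪z k, v k - d k⟫ +
      (q - 1) ^ (q - 1) / q ^ q * lam ^ (1 - q) * N.dualNorm (z k) ^ q) := by
  have hk : ∀ k ∈ s, w k * f (v k) ≤ lam * (w k * N (v k - d k) ^ p) + w k * (f (v k) +
      ⟪z k, v k - d k⟫ + (q - 1) ^ (q - 1) / q ^ q * lam ^ (1 - q) * N.dualNorm (z k) ^ q) :=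
    fun k _ => by
      nlinarith [mul_le_mul_of_nonneg_left (neg_inner_sub_le hN hpq hlam (z k) (v k) (d k)) (hw k)]
  calc ∑ k ∈ s, w k * f (v k) ≤ ∑ k ∈ s, (lam * (w k * N (v k - d k) ^ p) + _) :=
      Finset.sum_le_sum hk
    _ ≤ _ := by
      rw [Finset.sum_add_distrib, ← Finset.mul_sum]
      gcongr

end InnerProductSpace

end Seminorm

theorem stmt_17_general {m K : ℕ}
    (nrm : EuclideanSpace ℝ (Fin m) → ℝ)
    (hnrm_add : ∀ x y, nrm (x + y) ≤ nrm x + nrm y)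
    (hnrm_smul : ∀ (c : ℝ) x, nrm (c • x) = |c| * nrm x)
    (hnrm_def : ∀ x, nrm x = 0 → x = 0)
    (dualNrm : EuclideanSpace ℝ (Fin m) → ℝ)
    (hdualNrm : ∀ z, dualNrm z = sSup {t : ℝ | ∃ u, nrm u ≤ 1 ∧ t = ⟪z, u⟫})
    (S : Set (EuclideanSpace ℝ (Fin m)))
    (g : EuclideanSpace ℝ (Fin m) → ℝ)
    (p q : ℝ) (hp : 1 < p) (hq : q = p / (p - 1))
    (dbar : Fin K → EuclideanSpace ℝ (Fin m))
    (w : Fin K → ℝ) (hw_pos : ∀ k, 0 < w k)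
    (ε : ℝ)
    (conj : EuclideanSpace ℝ (Fin m) → EReal)
    (hconj : ∀ w', conj w' = ⨆ u : EuclideanSpace ℝ (Fin m), ((⟪w', u⟫ + g u : ℝ) : EReal))
    (sigmaS : EuclideanSpace ℝ (Fin m) → EReal)
    (hsigmaS : ∀ y', sigmaS y' = sSup {t : EReal | ∃ u ∈ S, t = ((⟪y', u⟫ : ℝ) : EReal)})
    (lam : ℝ) (hlam : 0 < lam)
    (z y : Fin K → EuclideanSpace ℝ (Fin m)) :
    sSup {t : EReal | ∃ v : Fin K → EuclideanSpace ℝ (Fin m),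
        (∀ k, v k ∈ S) ∧
        ∑ k, w k * nrm (v k - dbar k) ^ p ≤ ε ^ p ∧
        t = ((∑ k, w k * g (v k) : ℝ) : EReal)} ≤
      ((lam * ε ^ p : ℝ) : EReal) +
        ∑ k, ((w k : ℝ) : EReal) *
          (conj (z k - y k) + sigmaS (y k) +
            ((-⟪z k, dbar k⟫ +
              (q - 1) ^ (q - 1) / q ^ q * lam ^ (1 - q) * dualNrm (z k) ^ q : ℝ) : EReal)) := by
  obtain ⟨N, rfl⟩ : ∃ N : Seminorm ℝ (EuclideanSpace ℝ (Fin m)), ⇑N = nrm :=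
    ⟨Seminorm.of nrm hnrm_add fun c x => by rw [hnrm_smul, Real.norm_eq_abs], rfl⟩
  obtain rfl : dualNrm = N.dualNorm := funext hdualNrm
  have hpq : p.HolderConjugate q := (Real.holderConjugate_iff_eq_conjExponent hp).2 hq
  refine sSup_le ?_
  rintro _ ⟨v, hvS, hbudget, rfl⟩
  set penalty : Fin K → ℝ := fun k =>
    (q - 1) ^ (q - 1) / q ^ q * lam ^ (1 - q) * N.dualNorm (z k) ^ q
  have hdual : ∀ k, ((g (v k) + ⟪z k, v k - dbar k⟫ + penalty k : ℝ) : EReal) ≤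
      conj (z k - y k) + sigmaS (y k) + ((-⟪z k, dbar k⟫ + penalty k : ℝ) : EReal) := fun k => by
    have hsplit : g (v k) + ⟪z k, v k - dbar k⟫ + penalty k =
        ⟪z k, v k⟫ + g (v k) + (-⟪z k, dbar k⟫ + penalty k) := by
      rw [inner_sub_right]; ring
    rw [hsplit, EReal.coe_add, hconj, hsigmaS]
    gcongr
    exact coe_inner_add_le_iSup_add_sSup g (hvS k) (z k) (y k)
  calc ((∑ k, w k * g (v k) : ℝ) : EReal)
      ≤ ((lam * ε ^ p + ∑ k, w k * (g (v k) + ⟪z k, v k - dbar k⟫ + penalty k) : ℝ) : EReal) :=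
      EReal.coe_le_coe_iff.2 <|
        N.sum_mul_le_lagrangian hnrm_def hpq hlam _ (fun k => (hw_pos k).le) g v dbar z hbudget
    _ ≤ _ := by
      rw [EReal.coe_add, EReal.coe_finset_sum]
      gcongr with k
      rw [EReal.coe_mul]
      exact mul_le_mul_of_nonneg_left (hdual k) (EReal.coe_nonneg.2 (hw_pos k).le)

/-- weak duality for the order-`p` MRO constraint: the worst-case
weighted average of `g` over the uncertainty set is bounded by the dual objective
for any multiplier `λ > 0` and dual variables `z_k, y_k`. -/
theorem stmt_17 {m K : ℕ} (hK : 1 ≤ K)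
    (nrm : EuclideanSpace ℝ (Fin m) → ℝ)
    (hnrm_add : ∀ x y, nrm (x + y) ≤ nrm x + nrm y)
    (hnrm_smul : ∀ (c : ℝ) x, nrm (c • x) = |c| * nrm x)
    (hnrm_def : ∀ x, nrm x = 0 → x = 0)
    (dualNrm : EuclideanSpace ℝ (Fin m) → ℝ)
    (hdualNrm : ∀ z, dualNrm z = sSup {t : ℝ | ∃ u, nrm u ≤ 1 ∧ t = ⟪z, u⟫})
    (S : Set (EuclideanSpace ℝ (Fin m))) (hSne : S.Nonempty)
    (g : EuclideanSpace ℝ (Fin m) → ℝ)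
    (p q : ℝ) (hp : 1 < p) (hq : q = p / (p - 1))
    (dbar : Fin K → EuclideanSpace ℝ (Fin m))
    (w : Fin K → ℝ) (hw_pos : ∀ k, 0 < w k) (hw_sum : ∑ k, w k = 1)
    (ε : ℝ) (hε : 0 < ε)
    (conj : EuclideanSpace ℝ (Fin m) → EReal)
    (hconj : ∀ w', conj w' = ⨆ u : EuclideanSpace ℝ (Fin m), ((⟪w', u⟫ + g u : ℝ) : EReal))
    (sigmaS : EuclideanSpace ℝ (Fin m) → EReal)
    (hsigmaS : ∀ y', sigmaS y' = sSup {t : EReal | ∃ u ∈ S, t = ((⟪y', u⟫ : ℝ) : EReal)})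
    (lam : ℝ) (hlam : 0 < lam)
    (z y : Fin K → EuclideanSpace ℝ (Fin m)) :
    sSup {t : EReal | ∃ v : Fin K → EuclideanSpace ℝ (Fin m),
        (∀ k, v k ∈ S) ∧
        ∑ k, w k * nrm (v k - dbar k) ^ p ≤ ε ^ p ∧
        t = ((∑ k, w k * g (v k) : ℝ) : EReal)} ≤
      ((lam * ε ^ p : ℝ) : EReal) +
        ∑ k, ((w k : ℝ) : EReal) *
          (conj (z k - y k) + sigmaS (y k) +
            ((-⟪z k, dbar k⟫ +
              (q - 1) ^ (q - 1) / q ^ q * lam ^ (1 - q) * dualNrm (z k) ^ q : ℝ) : EReal)) :=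
  stmt_17_general nrm hnrm_add hnrm_smul hnrm_def dualNrm hdualNrm S g p q hp hq dbar w hw_pos ε
    conj hconj sigmaS hsigmaS lam hlam z y
end
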